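/- Let A be a symmetric positive definite real 3×3 matrix and let ε > 0. For each φ ∈ ℝ let X(φ) := (1/(2ε))·(−φ·I + S(φ)), where S(φ) is the unique positive semidefinite square root of φ²·I + 4ε·A (so X(φ) is the unique positive definite solution of φ·X + ε·X² = A). Then there exists exactly one φ ∈ ℝ such that det X(φ) = 1. -/

import Mathlib

/-!
Let `a₁, a₂, a₃ > 0` be the eigenvalues of `A` and let `x = quadRoot ε φ a` be the positive root
of `ε x² + φ x = a`. Through the functional calculus of `A`, the matrix `X(φ)` is `quadRoot ε φ`
applied to `A`, so `det X(φ) = ∏ᵢ quadRoot ε φ aᵢ`. Each factor is continuous and strictly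
decreasing in `φ` (a larger `φ` forces a smaller positive root), and equals `1` exactly at
`φ = aᵢ - ε`. Hence the product is `≥ 1` at `φ = -ε`, `≤ 1` at `φ = ∑ aᵢ - ε`, and the
intermediate value theorem together with strict monotonicity gives exactly one `φ` with
`det X(φ) = 1`.
-/

open Matrix

abbrev Mat := Matrix (Fin 3) (Fin 3) ℝ

noncomputable def quadRoot (ε φ a : ℝ) : ℝ := (-φ + √(φ ^ 2 + 4 * ε * a)) / (2 * ε)

section quadRoot

variable {ε a : ℝ}

lemma quadRoot_spec (hε : 0 < ε) (ha : 0 ≤ a) (φ : ℝ) :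
    ε * quadRoot ε φ a ^ 2 + φ * quadRoot ε φ a = a := by
  have hs : √(φ ^ 2 + 4 * ε * a) ^ 2 = φ ^ 2 + 4 * ε * a := Real.sq_sqrt (by positivity)
  rw [quadRoot]
  generalize √(φ ^ 2 + 4 * ε * a) = s at hs ⊢
  field_simp
  linear_combination hs

lemma quadRoot_pos (hε : 0 < ε) (ha : 0 < a) (φ : ℝ) : 0 < quadRoot ε φ a := by
  have h4εa : 0 < 4 * ε * a := by positivity
  have : φ < √(φ ^ 2 + 4 * ε * a) := (le_abs_self φ).trans_lt <|
    Real.sqrt_sq_eq_abs φ ▸ Real.sqrt_lt_sqrt (sq_nonneg φ) (by linarith)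
  exact div_pos (by linarith) (by linarith)

lemma quadRoot_sub_self (hε : 0 < ε) (ha : 0 ≤ a) : quadRoot ε (a - ε) a = 1 := by
  rw [quadRoot, show (a - ε) ^ 2 + 4 * ε * a = (a + ε) ^ 2 by ring, Real.sqrt_sq (by linarith)]
  field_simp
  ring

lemma quadRoot_strictAnti (hε : 0 < ε) (ha : 0 < a) : StrictAnti (quadRoot ε · a) := by
  intro φ ψ hφψ
  by_contra! hle
  have hx := quadRoot_spec hε ha.le ψ
  have hy := quadRoot_spec hε ha.le φ
  have hx0 := quadRoot_pos hε ha ψ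
  have hy0 := quadRoot_pos hε ha φ
  set x := quadRoot ε ψ a
  set y := quadRoot ε φ a
  -- `x (ε x + ψ) = a > 0`, and subtracting the two root equations gives
  -- `0 = (x - y) (ε (x + y) + ψ) + (ψ - φ) y`, which is positive when `y ≤ x`.
  have hslope : 0 < ε * x + ψ := pos_of_mul_pos_right (a := x) (by nlinarith) hx0.le
  nlinarith [mul_nonneg (sub_nonneg.2 hle) (by positivity : 0 ≤ ε * y),
    mul_pos hx0 (sub_pos.2 hφψ)]

lemma continuous_quadRoot (ε a : ℝ) : Continuous (quadRoot ε · a) := by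
  unfold quadRoot
  fun_prop

end quadRoot

lemma existsUnique_prod_quadRoot_eq_one {ι : Type*} [Fintype ι] [Nonempty ι] {ε : ℝ}
    (hε : 0 < ε) {a : ι → ℝ} (ha : ∀ i, 0 < a i) : ∃! φ, ∏ i, quadRoot ε φ (a i) = 1 := by
  set F : ℝ → ℝ := fun φ ↦ ∏ i, quadRoot ε φ (a i)
  have hF : StrictAnti F := fun φ ψ h ↦ Finset.prod_lt_prod_of_nonempty
    (fun i _ ↦ quadRoot_pos hε (ha i) ψ) (fun i _ ↦ quadRoot_strictAnti hε (ha i) h)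
    Finset.univ_nonempty
  have hsum : 0 ≤ ∑ i, a i := Finset.sum_nonneg fun i _ ↦ (ha i).le
  have hlo : 1 ≤ F (-ε) := Finset.one_le_prod fun i _ ↦ by
    rw [← quadRoot_sub_self hε (ha i).le]
    exact (quadRoot_strictAnti hε (ha i)).antitone (by linarith [ha i])
  have hhi : F (∑ i, a i - ε) ≤ 1 :=
    Finset.prod_le_one (fun i _ ↦ (quadRoot_pos hε (ha i) _).le) fun i _ ↦ by
      rw [← quadRoot_sub_self hε (ha i).le]
      exact (quadRoot_strictAnti hε (ha i)).antitone
        (by linarith [Finset.single_le_sum (fun j _ ↦ (ha j).le) (Finset.mem_univ i)])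
  obtain ⟨φ, -, hφ⟩ := intermediate_value_Icc' (by linarith : -ε ≤ ∑ i, a i - ε)
    (continuous_finsetProd _ fun i _ ↦ continuous_quadRoot ε (a i)).continuousOn ⟨hhi, hlo⟩
  exact ⟨φ, hφ, fun ψ hψ ↦ hF.injective (hψ.trans hφ.symm)⟩

section Matrix

open scoped ComplexOrder MatrixOrder

variable {n 𝕜 : Type*} [Fintype n] [DecidableEq n] [RCLike 𝕜]

lemma Matrix.IsHermitian.det_cfc {A : Matrix n n 𝕜} (hA : A.IsHermitian) (f : ℝ → ℝ) :
    (cfc f A).det = ∏ i, (f (hA.eigenvalues i) : 𝕜) := by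
  simp [hA.cfc_eq, IsHermitian.cfc, -Unitary.conjStarAlgAut_apply]

lemma cfc_sqrt_mul_self {A : Matrix n n 𝕜} (hA : 0 ≤ A) {ε : ℝ} (hε : 0 ≤ ε) (φ : ℝ) :
    cfc (fun x ↦ √(φ ^ 2 + 4 * ε * x)) A * cfc (fun x ↦ √(φ ^ 2 + 4 * ε * x)) A =
      φ ^ 2 • 1 + (4 * ε) • A := by
  rw [← cfc_mul .., cfc_congr (g := fun x ↦ φ ^ 2 + 4 * ε * x),
    cfc_const_add (φ ^ 2) (4 * ε * ·) A, cfc_const_mul_id (4 * ε) A,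
    Algebra.algebraMap_eq_smul_one]
  intro x hx
  have := spectrum_nonneg_of_nonneg hA hx
  exact Real.mul_self_sqrt (by positivity)

lemma exists_posSemidef_mul_self_eq {A : Matrix n n 𝕜} (hA : A.PosSemidef) {ε : ℝ} (hε : 0 ≤ ε)
    (φ : ℝ) : ∃ S : Matrix n n 𝕜, S.PosSemidef ∧ S * S = φ ^ 2 • 1 + (4 * ε) • A :=
  ⟨_, (cfc_nonneg fun _ _ ↦ Real.sqrt_nonneg _).posSemidef, cfc_sqrt_mul_self hA.nonneg hε φ⟩

lemma eq_cfc_quadRoot {A S : Matrix n n 𝕜} (hA : A.PosSemidef) {ε φ : ℝ} (hε : 0 < ε)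
    (hS : S.PosSemidef) (hSS : S * S = φ ^ 2 • 1 + (4 * ε) • A) :
    (1 / (2 * ε)) • (-(φ • 1) + S) = cfc (quadRoot ε φ) A := by
  have hS' : S = cfc (fun x ↦ √(φ ^ 2 + 4 * ε * x)) A :=
    (CFC.sqrt_unique hSS hS.nonneg).symm.trans <|
      CFC.sqrt_unique (cfc_sqrt_mul_self hA.nonneg hε.le φ)
        (cfc_nonneg fun _ _ ↦ Real.sqrt_nonneg _)
  have hquad : quadRoot ε φ = fun x ↦ (1 / (2 * ε)) * (-φ + √(φ ^ 2 + 4 * ε * x)) := by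
    ext x
    rw [quadRoot]
    ring
  rw [hquad, cfc_const_mul _ _ A, cfc_const_add (-φ) _ A, ← hS',
    Algebra.algebraMap_eq_smul_one, neg_smul]

end Matrix

theorem exists_unique_phi (A : Mat) (hA : A.PosDef) (ε : ℝ) (hε : 0 < ε) :
    ∃! φ : ℝ, ∀ S : Mat, S.PosSemidef → S * S = φ ^ 2 • (1 : Mat) + (4 * ε) • A →
      ((1 / (2 * ε)) • (-(φ • (1 : Mat)) + S)).det = 1 := by
  have hdet : ∀ φ (S : Mat), S.PosSemidef → S * S = φ ^ 2 • 1 + (4 * ε) • A →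
      ((1 / (2 * ε)) • (-(φ • (1 : Mat)) + S)).det =
        ∏ i, quadRoot ε φ (hA.isHermitian.eigenvalues i) := fun φ S hS hSS ↦ by
    rw [eq_cfc_quadRoot hA.posSemidef hε hS hSS, hA.isHermitian.det_cfc]
    rfl
  obtain ⟨φ, hφ, huniq⟩ := existsUnique_prod_quadRoot_eq_one hε hA.eigenvalues_pos
  refine ⟨φ, fun S hS hSS ↦ (hdet φ S hS hSS).trans hφ, fun ψ hψ ↦ huniq ψ ?_⟩
  obtain ⟨S, hS, hSS⟩ := exists_posSemidef_mul_self_eq hA.posSemidef hε.le ψ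
  exact (hdet ψ S hS hSS).symm.trans (hψ S hS hSS)
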